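/- arXiv:2009.07766 — 8 statements merged into one kernel-verified Lean document; each statement's English description precedes it below -/
import Mathlib

section
/- Let (S,·) be a subsemigroup of ((0,1),·). Then 0⁺(S) is a two-sided ideal of the semigroup (βS,⊙): if U ∈ 0⁺(S) and V ∈ βS, then both V⊙U and U⊙V belong to 0⁺(S). -/
open Set MvPolynomial

attribute [local instance] Ultrafilter.mul

/-- `βT`: ultrafilters on `ℝ` concentrated on `T`. -/
def beta (T : Set ℝ) : Set (Ultrafilter ℝ) := {U | T ∈ U}

/-- `0⁺(S)`: ultrafilters on `S` containing every `(0, ε) ∩ S`. -/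
def zeroPlus (S : Set ℝ) : Set (Ultrafilter ℝ) :=
  {U | S ∈ U ∧ ∀ ε : ℝ, 0 < ε → Ioo 0 ε ∩ S ∈ U}

/-- `I` is a (nonempty) two-sided ideal of `(βT, ⊙)`. -/
def IsIdealIn (T : Set ℝ) (I : Set (Ultrafilter ℝ)) : Prop :=
  I.Nonempty ∧ I ⊆ beta T ∧
    ∀ U ∈ I, ∀ V ∈ beta T, U * V ∈ I ∧ V * U ∈ I

/-- `K(βT, ⊙)`: the smallest two-sided ideal, i.e. the intersection of all of them. -/
def K (T : Set ℝ) : Set (Ultrafilter ℝ) := ⋂₀ {I | IsIdealIn T I}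

/-- `S` is a subsemigroup of `((0,1), ·)`. -/
def IsUnitSubsemigroup (S : Set ℝ) : Prop :=
  S.Nonempty ∧ S ⊆ Ioo 0 1 ∧ ∀ a ∈ S, ∀ b ∈ S, a * b ∈ S

/-- The system `σ = 0` has a solution with all entries in `A`. -/
def SolvableIn {n m : ℕ} (σ : Fin m → MvPolynomial (Fin n) ℝ) (A : Set ℝ) : Prop :=
  ∃ a : Fin n → ℝ, (∀ i, a i ∈ A) ∧ ∀ j, eval a (σ j) = 0

/-- The system `σ = 0` is partition regular on `S`. -/
def PartRegOn {n m : ℕ} (σ : Fin m → MvPolynomial (Fin n) ℝ) (S : Set ℝ) : Prop :=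
  ∀ (k : ℕ) (c : ℝ → Fin k), ∃ j : Fin k, SolvableIn σ {x ∈ S | c x = j}

/-- The system `σ = 0` is partition regular near zero on `S`. -/
def PartRegNearZero {n m : ℕ} (σ : Fin m → MvPolynomial (Fin n) ℝ) (S : Set ℝ) : Prop :=
  ∀ ε : ℝ, 0 < ε → ∀ (k : ℕ) (c : ℝ → Fin k),
    ∃ j : Fin k, SolvableIn σ ({x ∈ S | c x = j} ∩ Ioo 0 ε)

/-- `U` is a `ι_σ`-ultrafilter: every member of `U` contains a solution of `σ = 0`. -/
def IotaUltra {n m : ℕ} (σ : Fin m → MvPolynomial (Fin n) ℝ) (U : Ultrafilter ℝ) : Prop :=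
  ∀ A ∈ U, SolvableIn σ A

/-- `A` is piecewise syndetic in the semigroup `(T, ·)`. -/
def PiecewiseSyndeticIn (T A : Set ℝ) : Prop :=
  ∃ G : Finset ℝ, (G : Set ℝ) ⊆ T ∧ ∀ F : Finset ℝ, (F : Set ℝ) ⊆ T →
    ∃ x ∈ T, ∀ f ∈ F, ∃ g ∈ G, g * (f * x) ∈ A

/-- `S` is a `ℚ`-infinitesimal semigroup. -/
def QInfinitesimal (S : Set ℝ) : Prop :=
  S ⊆ Ioo 0 1 ∧ (∀ a ∈ S, ∀ b ∈ S, a * b ∈ S) ∧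
    ∀ s ∈ S, ∀ q : ℚ, 0 < q → (q : ℝ) * s < 1 → (q : ℝ) * s ∈ S

/-- `T` is an HL-semigroup. -/
def IsHLSemigroup (T : Set ℝ) : Prop :=
  T ⊆ Ioi 0 ∧ (∀ x ∈ T, ∀ y ∈ T, x + y ∈ T) ∧
    (∀ a b : ℝ, 0 < a → a < b → ∃ t ∈ T, a < t ∧ t < b) ∧
    (∀ x ∈ T ∩ Ioo 0 1, ∀ y ∈ T ∩ Ioo 0 1, x * y ∈ T ∩ Ioo 0 1) ∧
    (∀ y ∈ T ∩ Ioo 0 1, ∀ x ∈ T, x / y ∈ T ∧ y * x ∈ T)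

/-- The positive rationals, as a subset of `ℝ`. -/
def Qpos : Set ℝ := {x | 0 < x ∧ ∃ q : ℚ, x = (q : ℝ)}

/-- The system `σ = 0` is homogeneous: solutions are invariant under nonzero scaling. -/
def Homogeneous {n m : ℕ} (σ : Fin m → MvPolynomial (Fin n) ℝ) : Prop :=
  ∀ a : ℝ, a ≠ 0 → ∀ b : Fin n → ℝ,
    ((∀ j, eval b (σ j) = 0) ↔ ∀ j, eval (fun i => a * b i) (σ j) = 0)

open Filter in
lemma mul_mem_zeroPlus (S : Set ℝ) (hS : IsUnitSubsemigroup S)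
    (U V : Ultrafilter ℝ) (hV : S ∈ V) (hUS : S ∈ U)
    (hU : ∀ ε : ℝ, 0 < ε → Ioo 0 ε ∩ S ∈ U) : V * U ∈ zeroPlus S := by
  obtain ⟨-, hsub, hmul⟩ := hS
  constructor
  · rw [Ultrafilter.mem_coe.symm, Filter.eventually_mem_set.symm, Ultrafilter.eventually_mul]
    filter_upwards [hV] with a ha
    filter_upwards [hUS] with b hb
    exact hmul a ha b hb
  · intro ε hε
    rw [Ultrafilter.mem_coe.symm, Filter.eventually_mem_set.symm, Ultrafilter.eventually_mul]
    filter_upwards [hV] with a ha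
    filter_upwards [hU ε hε] with b hb
    have hab := hmul a ha b hb.2
    refine ⟨⟨(hsub hab).1, ?_⟩, hab⟩
    calc a * b < 1 * ε :=
          mul_lt_mul' (le_of_lt (hsub ha).2) hb.1.2 (le_of_lt hb.1.1) one_pos
      _ = ε := one_mul ε

open Filter in
lemma mul_mem_zeroPlus' (S : Set ℝ) (hS : IsUnitSubsemigroup S)
    (U V : Ultrafilter ℝ) (hV : S ∈ V) (hUS : S ∈ U)
    (hU : ∀ ε : ℝ, 0 < ε → Ioo 0 ε ∩ S ∈ U) : U * V ∈ zeroPlus S := by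
  obtain ⟨-, hsub, hmul⟩ := hS
  constructor
  · rw [Ultrafilter.mem_coe.symm, Filter.eventually_mem_set.symm, Ultrafilter.eventually_mul]
    filter_upwards [hUS] with a ha
    filter_upwards [hV] with b hb
    exact hmul a ha b hb
  · intro ε hε
    rw [Ultrafilter.mem_coe.symm, Filter.eventually_mem_set.symm, Ultrafilter.eventually_mul]
    filter_upwards [hU ε hε] with a ha
    filter_upwards [hV] with b hb
    have hab := hmul a ha.2 b hb
    refine ⟨⟨(hsub hab).1, ?_⟩, hab⟩
    calc a * b < ε * 1 :=
          mul_lt_mul ha.1.2 (le_of_lt (hsub hb).2) (hsub hb).1 (le_of_lt hε)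
      _ = ε := mul_one ε

theorem statement4 (S : Set ℝ) (hS : IsUnitSubsemigroup S)
    (U : Ultrafilter ℝ) (hU : U ∈ zeroPlus S) (V : Ultrafilter ℝ) (hV : V ∈ beta S) :
    V * U ∈ zeroPlus S ∧ U * V ∈ zeroPlus S := by exact ⟨mul_mem_zeroPlus S hS U V hV hU.1 hU.2,
    mul_mem_zeroPlus' S hS U V hV hU.1 hU.2⟩
end

section
/- Let (S,·) be a subsemigroup of ((0,1),·). The following are equivalent: (i) S is piecewise syndetic in ((0,1),·); (ii) there exists U ∈ K(β(0,1),⊙) with S ∈ U; (iii) K(β(0,1),⊙) ∩ 0⁺(S) = K(βS,⊙); (iv) K(β(0,1),⊙) ∩ 0⁺(S) ≠ ∅. -/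
open Set MvPolynomial

attribute [local instance] Ultrafilter.mul

/-! ### Auxiliary development: smallest ideal of `β(0,1)` and piecewise syndeticity -/

lemma usup {U : Ultrafilter ℝ} {A B : Set ℝ} (h : A ∈ U) (hs : A ⊆ B) : B ∈ U :=
  Ultrafilter.mem_coe.1 (Filter.mem_of_superset h hs)

lemma mem_mul' {A : Set ℝ} {U V : Ultrafilter ℝ} :
    A ∈ U * V ↔ {a : ℝ | {b : ℝ | a * b ∈ A} ∈ V} ∈ U := Iff.rfl

lemma umul_assoc (U V W : Ultrafilter ℝ) : U * V * W = U * (V * W) :=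
  Ultrafilter.coe_inj.mp <| Filter.ext' fun p => by
    simp [Ultrafilter.eventually_mul, mul_assoc]

lemma ellis {M : Set (Ultrafilter ℝ)} (hne : M.Nonempty) (hcomp : IsCompact M)
    (hmul : ∀ x ∈ M, ∀ y ∈ M, x * y ∈ M) : ∃ e ∈ M, e * e = e := by
  letI : Semigroup (Ultrafilter ℝ) := Ultrafilter.semigroup
  exact exists_idempotent_in_compact_subsemigroup
    (fun r => Ultrafilter.continuous_mul_left r) M hne hcomp hmul

lemma beta_isClosed (T : Set ℝ) : IsClosed (beta T) := ultrafilter_isClosed_basic T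

lemma pure_mem_beta {T : Set ℝ} {a : ℝ} (ha : a ∈ T) : (pure a : Ultrafilter ℝ) ∈ beta T := ha

lemma beta_mono {T T' : Set ℝ} (h : T ⊆ T') : beta T ⊆ beta T' :=
  fun _U hU => usup hU h

section
variable {T : Set ℝ}

lemma mul_mem_beta (hmul : ∀ a ∈ T, ∀ b ∈ T, a * b ∈ T) {U V : Ultrafilter ℝ}
    (hU : U ∈ beta T) (hV : V ∈ beta T) : U * V ∈ beta T := by
  refine mem_mul'.2 (usup hU fun a ha => ?_)
  exact usup hV fun b hb => hmul a ha b hb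

/-- closed left ideals of `βT` -/
def LIdeal (T : Set ℝ) (L : Set (Ultrafilter ℝ)) : Prop :=
  L.Nonempty ∧ IsClosed L ∧ L ⊆ beta T ∧ ∀ V ∈ beta T, ∀ U ∈ L, V * U ∈ L

def IsMinLeft (T : Set ℝ) (L : Set (Ultrafilter ℝ)) : Prop :=
  LIdeal T L ∧ ∀ L', LIdeal T L' → L' ⊆ L → L' = L

lemma exists_minLeft_sub {L₀ : Set (Ultrafilter ℝ)} (h₀ : LIdeal T L₀) :
    ∃ L, IsMinLeft T L ∧ L ⊆ L₀ := by
  have hz : ∀ c ⊆ {L | LIdeal T L}, IsChain (· ⊆ ·) c → c.Nonempty →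
      ∃ lb ∈ {L | LIdeal T L}, ∀ s ∈ c, lb ⊆ s := by
    rintro c hcS hchain ⟨x, hx⟩
    refine ⟨⋂₀ c, ⟨?_, isClosed_sInter fun t ht => (hcS ht).2.1,
      fun U hU => (hcS hx).2.2.1 (hU x hx),
      fun V hV U hU t ht => (hcS ht).2.2.2 V hV U (hU t ht)⟩,
      fun s hs => sInter_subset_of_mem hs⟩
    rw [sInter_eq_iInter]
    have : Nonempty c := ⟨⟨x, hx⟩⟩
    exact IsCompact.nonempty_iInter_of_directed_nonempty_isCompact_isClosed
      ((↑) : c → Set (Ultrafilter ℝ))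
      (DirectedOn.directed_val (IsChain.directedOn hchain.symm))
      (fun i => (hcS i.prop).1)
      (fun i => (hcS i.prop).2.1.isCompact) (fun i => (hcS i.prop).2.1)
  obtain ⟨m, hm₀, hmin⟩ := zorn_superset_nonempty {L | LIdeal T L} hz L₀ h₀
  exact ⟨m, ⟨hmin.prop, fun L' hL' hsub => hmin.eq_of_subset hL' hsub⟩, hm₀⟩

/-- the orbit `βT * U` is a closed left ideal -/
lemma orbit_lideal (hmul : ∀ a ∈ T, ∀ b ∈ T, a * b ∈ T) {U : Ultrafilter ℝ}
    (hU : U ∈ beta T) : LIdeal T ((· * U) '' beta T) := by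
  refine ⟨⟨U * U, U, hU, rfl⟩, ?_, ?_, ?_⟩
  · exact ((beta_isClosed T).isCompact.image (Ultrafilter.continuous_mul_left U)).isClosed
  · rintro _ ⟨V, hV, rfl⟩; exact mul_mem_beta hmul hV hU
  · rintro V hV _ ⟨W, hW, rfl⟩
    exact ⟨V * W, mul_mem_beta hmul hV hW, umul_assoc V W U⟩

lemma minLeft_eq_orbit (hmul : ∀ a ∈ T, ∀ b ∈ T, a * b ∈ T) {L : Set (Ultrafilter ℝ)}
    (hL : IsMinLeft T L) {U : Ultrafilter ℝ} (hU : U ∈ L) : (· * U) '' beta T = L := by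
  refine hL.2 _ (orbit_lideal hmul (hL.1.2.2.1 hU)) ?_
  rintro _ ⟨V, hV, rfl⟩
  exact hL.1.2.2.2 V hV U hU

/-- minimal closed left ideals are minimal among all left ideals -/
lemma minLeft_min (hmul : ∀ a ∈ T, ∀ b ∈ T, a * b ∈ T) {L L' : Set (Ultrafilter ℝ)}
    (hL : IsMinLeft T L) (hsub : L' ⊆ L) (hne : L'.Nonempty)
    (hli : ∀ V ∈ beta T, ∀ U ∈ L', V * U ∈ L') : L ⊆ L' := by
  obtain ⟨U, hU⟩ := hne
  rw [← minLeft_eq_orbit hmul hL (hsub hU)]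
  rintro _ ⟨V, hV, rfl⟩
  exact hli V hV U hU

def K0 (T : Set ℝ) : Set (Ultrafilter ℝ) := {U | ∃ L, IsMinLeft T L ∧ U ∈ L}

lemma beta_lideal (hmul : ∀ a ∈ T, ∀ b ∈ T, a * b ∈ T) (hne : T.Nonempty) :
    LIdeal T (beta T) := by
  obtain ⟨a, ha⟩ := hne
  exact ⟨⟨pure a, ha⟩, beta_isClosed T, subset_rfl,
    fun V hV U hU => mul_mem_beta hmul hV hU⟩

lemma minLeft_mul (hmul : ∀ a ∈ T, ∀ b ∈ T, a * b ∈ T) {L : Set (Ultrafilter ℝ)}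
    (hL : IsMinLeft T L) {V : Ultrafilter ℝ} (hV : V ∈ beta T) :
    IsMinLeft T ((· * V) '' L) := by
  have hli : LIdeal T ((· * V) '' L) := by
    refine ⟨hL.1.1.image _, (hL.1.2.1.isCompact.image
      (Ultrafilter.continuous_mul_left V)).isClosed, ?_, ?_⟩
    · rintro _ ⟨W, hW, rfl⟩; exact mul_mem_beta hmul (hL.1.2.2.1 hW) hV
    · rintro V' hV' _ ⟨W, hW, rfl⟩
      exact ⟨V' * W, hL.1.2.2.2 V' hV' W hW, umul_assoc V' W V⟩
  refine ⟨hli, fun L' hL' hsub => ?_⟩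
  set A := L ∩ (· * V) ⁻¹' L' with hA
  have hAli : LIdeal T A := by
    refine ⟨?_, hL.1.2.1.inter (hL'.2.1.preimage (Ultrafilter.continuous_mul_left V)),
      fun U hU => hL.1.2.2.1 hU.1, ?_⟩
    · obtain ⟨y, hy⟩ := hL'.1
      obtain ⟨w, hw, rfl⟩ := hsub hy
      exact ⟨w, hw, hy⟩
    · rintro V' hV' U ⟨hU1, hU2⟩
      refine ⟨hL.1.2.2.2 V' hV' U hU1, ?_⟩
      show V' * U * V ∈ L'
      rw [umul_assoc]
      exact hL'.2.2.2 V' hV' _ hU2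
  have hAeq : A = L := hL.2 A hAli inter_subset_left
  refine Set.Subset.antisymm hsub ?_
  rintro _ ⟨w, hw, rfl⟩
  exact (hAeq ▸ hw : w ∈ A).2

lemma K0_ideal (hmul : ∀ a ∈ T, ∀ b ∈ T, a * b ∈ T) (hne : T.Nonempty) :
    IsIdealIn T (K0 T) := by
  obtain ⟨L, hL, -⟩ := exists_minLeft_sub (beta_lideal hmul hne)
  obtain ⟨p, hp⟩ := hL.1.1
  refine ⟨⟨p, L, hL, hp⟩, fun U ⟨M, hM, hUM⟩ => hM.1.2.2.1 hUM, ?_⟩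
  rintro U ⟨M, hM, hUM⟩ V hV
  constructor
  · exact ⟨(· * V) '' M, minLeft_mul hmul hM hV, ⟨U, hUM, rfl⟩⟩
  · exact ⟨M, hM, hM.1.2.2.2 V hV U hUM⟩

lemma K0_subset_ideal (hmul : ∀ a ∈ T, ∀ b ∈ T, a * b ∈ T)
    {J : Set (Ultrafilter ℝ)} (hJ : IsIdealIn T J) : K0 T ⊆ J := by
  rintro p ⟨L, hL, hpL⟩
  obtain ⟨j, hj⟩ := hJ.1
  have hLJ : L ⊆ L ∩ J := by
    refine minLeft_min hmul hL inter_subset_left ⟨j * p, ?_, ?_⟩ ?_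
    · exact hL.1.2.2.2 j (hJ.2.1 hj) p hpL
    · exact (hJ.2.2 j hj p (hL.1.2.2.1 hpL)).1
    · rintro V hV U ⟨hU1, hU2⟩
      exact ⟨hL.1.2.2.2 V hV U hU1, (hJ.2.2 U hU2 V hV).2⟩
  exact (hLJ hpL).2

lemma K_eq (hmul : ∀ a ∈ T, ∀ b ∈ T, a * b ∈ T) (hne : T.Nonempty) : K T = K0 T := by
  refine Set.Subset.antisymm (sInter_subset_of_mem (K0_ideal hmul hne)) ?_
  intro p hp
  exact Set.mem_sInter.2 fun J hJ => K0_subset_ideal hmul hJ hp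

lemma K_ideal (hmul : ∀ a ∈ T, ∀ b ∈ T, a * b ∈ T) (hne : T.Nonempty) :
    IsIdealIn T (K T) := (K_eq hmul hne) ▸ K0_ideal hmul hne

open Classical in
lemma ps_to_K (hmul : ∀ a ∈ T, ∀ b ∈ T, a * b ∈ T) (hne : T.Nonempty) {A : Set ℝ}
    (hps : PiecewiseSyndeticIn T A) : ∃ U ∈ K T, A ∈ U := by
  obtain ⟨G, hGT, hG⟩ := hps
  set Y : Finset ℝ → Set ℝ :=
    fun F => {x | x ∈ T ∧ ∀ f ∈ F, f ∈ T → ∃ g ∈ G, g * (f * x) ∈ A} with hY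
  have hYne : ∀ F, (Y F).Nonempty := by
    intro F
    obtain ⟨x, hxT, hx⟩ := hG (F.filter (· ∈ T)) (fun f hf => (Finset.mem_filter.1 hf).2)
    exact ⟨x, hxT, fun f hf hfT => hx f (Finset.mem_filter.2 ⟨hf, hfT⟩)⟩
  have hdir : Directed (· ≥ ·) fun F => Filter.principal (Y F) := by
    intro F1 F2
    refine ⟨F1 ∪ F2, Filter.principal_mono.2 ?_, Filter.principal_mono.2 ?_⟩ <;>
      · rintro x ⟨hxT, hx⟩
        exact ⟨hxT, fun f hf hfT => hx f (Finset.mem_union.2 (by tauto)) hfT⟩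
  have : (⨅ F, Filter.principal (Y F)).NeBot :=
    Filter.iInf_neBot_of_directed hdir fun F => Filter.principal_neBot_iff.2 (hYne F)
  obtain ⟨p, hple⟩ := Ultrafilter.exists_le (⨅ F, Filter.principal (Y F))
  have hYp : ∀ F, Y F ∈ p := fun F =>
    hple (Filter.mem_iInf_of_mem F (Filter.mem_principal_self _))
  have hTp : T ∈ p := usup (hYp ∅) fun x hx => hx.1
  set B : Set ℝ := {b | ∃ g ∈ G, g * b ∈ A} with hB
  have hqp : ∀ q ∈ beta T, B ∈ q * p := by
    intro q hq
    refine mem_mul'.2 (usup hq fun a ha => ?_)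
    refine usup (hYp {a}) fun x hx => ?_
    exact hx.2 a (Finset.mem_singleton_self a) ha
  obtain ⟨M, hM, hML⟩ := exists_minLeft_sub (orbit_lideal hmul hTp)
  obtain ⟨r, hrM⟩ := hM.1.1
  obtain ⟨q, hq, rfl⟩ := hML hrM
  have hBr : B ∈ q * p := hqp q hq
  have : B = ⋃ g ∈ (G : Set ℝ), {b | g * b ∈ A} := by
    ext b; simp [hB]
  rw [this] at hBr
  obtain ⟨g, hgG, hgB⟩ := (Ultrafilter.finite_biUnion_mem_iff (G.finite_toSet)).1 hBr
  have hKid := K0_ideal hmul hne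
  have hqpK : q * p ∈ K0 T := ⟨M, hM, hrM⟩
  refine ⟨(pure g : Ultrafilter ℝ) * (q * p), ?_, ?_⟩
  · rw [K_eq hmul hne]
    exact (hKid.2.2 _ hqpK _ (pure_mem_beta (hGT hgG))).2
  · exact mem_mul'.2 (Ultrafilter.mem_pure.2 hgB)

lemma K_to_ps (hmul : ∀ a ∈ T, ∀ b ∈ T, a * b ∈ T) (hne : T.Nonempty) {A : Set ℝ}
    {p : Ultrafilter ℝ} (hpK : p ∈ K T) (hAp : A ∈ p) : PiecewiseSyndeticIn T A := by
  rw [K_eq hmul hne] at hpK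
  obtain ⟨L, hL, hpL⟩ := hpK
  have hpT : p ∈ beta T := hL.1.2.2.1 hpL
  set D : ℝ → Set (Ultrafilter ℝ) := fun g => {r | {b | g * b ∈ A} ∈ r * p} with hD
  have hDopen : ∀ g : T, IsOpen (D g) := fun g =>
    (ultrafilter_isOpen_basic {b | (g : ℝ) * b ∈ A}).preimage
      (Ultrafilter.continuous_mul_left p)
  have hcover : beta T ⊆ ⋃ g : T, D g := by
    intro r hr
    have hrpL : r * p ∈ L := hL.1.2.2.2 r hr p hpL
    have horb := minLeft_eq_orbit hmul hL hrpL
    obtain ⟨w, hw, hwp⟩ : ∃ w ∈ beta T, w * (r * p) = p := by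
      have : p ∈ (· * (r * p)) '' beta T := horb ▸ hpL
      obtain ⟨w, hw, hwp⟩ := this
      exact ⟨w, hw, hwp⟩
    have hAw : {a | {b | a * b ∈ A} ∈ r * p} ∈ w :=
      mem_mul'.1 (show A ∈ w * (r * p) from hwp.symm ▸ hAp)
    obtain ⟨g, hg1, hg2⟩ := Ultrafilter.nonempty_of_mem (Ultrafilter.mem_coe.1
      (Filter.inter_mem (Ultrafilter.mem_coe.2 hAw) (Ultrafilter.mem_coe.2 hw)))
    exact Set.mem_iUnion.2 ⟨⟨g, hg2⟩, hg1⟩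
  obtain ⟨t, ht⟩ := (beta_isClosed T).isCompact.elim_finite_subcover _ hDopen hcover
  refine ⟨t.image Subtype.val, ?_, ?_⟩
  · intro g hg
    obtain ⟨g', _, rfl⟩ := Finset.mem_image.1 hg
    exact g'.2
  · intro F hF
    have hstep : ∀ f ∈ F, {x | ∃ g ∈ t.image Subtype.val, g * (f * x) ∈ A} ∈ p := by
      intro f hf
      have hfb : (pure f : Ultrafilter ℝ) ∈ beta T := pure_mem_beta (hF hf)
      obtain ⟨g, hgt, hgD⟩ := Set.mem_iUnion₂.1 (ht hfb)
      have hgD' : {b | (g : ℝ) * b ∈ A} ∈ (pure f : Ultrafilter ℝ) * p := hgD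
      have : {x | (g : ℝ) * (f * x) ∈ A} ∈ p := Ultrafilter.mem_pure.1 (mem_mul'.1 hgD')
      refine usup this fun x hx => ⟨g, Finset.mem_image.2 ⟨g, hgt, rfl⟩, hx⟩
    have hZ : (T ∩ ⋂ f ∈ F, {x | ∃ g ∈ t.image Subtype.val, g * (f * x) ∈ A}) ∈ p := by
      refine Ultrafilter.mem_coe.1 (Filter.inter_mem (Ultrafilter.mem_coe.2 hpT) ?_)
      exact (Filter.biInter_finset_mem F).2 fun f hf => Ultrafilter.mem_coe.2 (hstep f hf)
    obtain ⟨x, hxT, hx⟩ := Ultrafilter.nonempty_of_mem hZ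
    exact ⟨x, hxT, fun f hf => Set.mem_iInter₂.1 hx f hf⟩

end

lemma Imul : ∀ a ∈ Ioo (0:ℝ) 1, ∀ b ∈ Ioo (0:ℝ) 1, a * b ∈ Ioo (0:ℝ) 1 := by
  rintro a ⟨ha0, ha1⟩ b ⟨hb0, hb1⟩
  exact ⟨mul_pos ha0 hb0, by nlinarith⟩

lemma Ine : (Ioo (0:ℝ) 1).Nonempty := ⟨1/2, by norm_num⟩

section
variable {S : Set ℝ}

lemma eps_nonempty (hSsub : S ⊆ Ioo 0 1) (hSmul : ∀ a ∈ S, ∀ b ∈ S, a * b ∈ S)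
    (hSne : S.Nonempty) {ε : ℝ} (hε : 0 < ε) : (Ioo 0 ε ∩ S).Nonempty := by
  obtain ⟨a, ha⟩ := hSne
  obtain ⟨ha0, ha1⟩ := hSsub ha
  obtain ⟨n, hn⟩ := exists_pow_lt_of_lt_one hε ha1
  have hp : ∀ m : ℕ, a ^ (m + 1) ∈ S := by
    intro m
    induction m with
    | zero => simpa using ha
    | succ k ih => rw [pow_succ]; exact hSmul _ ih _ ha
  refine ⟨a ^ (n + 1), ⟨⟨pow_pos ha0 _, ?_⟩, hp n⟩⟩
  calc a ^ (n + 1) ≤ a ^ n := pow_le_pow_of_le_one ha0.le ha1.le (Nat.le_succ n)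
  _ < ε := hn

lemma exists_zeroPlus (hSsub : S ⊆ Ioo 0 1) (hSmul : ∀ a ∈ S, ∀ b ∈ S, a * b ∈ S)
    (hSne : S.Nonempty) : ∃ V : Ultrafilter ℝ, V ∈ zeroPlus S := by
  set f : {ε : ℝ // 0 < ε} → Filter ℝ := fun ε => Filter.principal (Ioo 0 ε.1 ∩ S) with hf
  have hdir : Directed (· ≥ ·) f := by
    intro ε1 ε2
    refine ⟨⟨min ε1.1 ε2.1, lt_min ε1.2 ε2.2⟩, Filter.principal_mono.2 ?_,
      Filter.principal_mono.2 ?_⟩ <;>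
      exact inter_subset_inter (Ioo_subset_Ioo le_rfl (by simp)) subset_rfl
  have : Nonempty {ε : ℝ // 0 < ε} := ⟨⟨1, one_pos⟩⟩
  have hNB : (⨅ ε, f ε).NeBot := Filter.iInf_neBot_of_directed hdir fun ε =>
    Filter.principal_neBot_iff.2 (eps_nonempty hSsub hSmul hSne ε.2)
  obtain ⟨V, hV⟩ := Ultrafilter.exists_le (⨅ ε, f ε)
  have hmem : ∀ ε : ℝ, 0 < ε → Ioo 0 ε ∩ S ∈ V := fun ε hε =>
    hV (Filter.mem_iInf_of_mem ⟨ε, hε⟩ (Filter.mem_principal_self _))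
  exact ⟨V, usup (hmem 1 one_pos) inter_subset_right, hmem⟩

lemma zeroPlus_absorb (hSsub : S ⊆ Ioo 0 1) (hSmul : ∀ a ∈ S, ∀ b ∈ S, a * b ∈ S)
    {V U : Ultrafilter ℝ} (hV : V ∈ zeroPlus S) (hU : S ∈ U) : V * U ∈ zeroPlus S := by
  refine ⟨?_, fun ε hε => ?_⟩
  · refine mem_mul'.2 (usup hV.1 fun a ha => ?_)
    exact usup hU fun b hb => hSmul a ha b hb
  · refine mem_mul'.2 (usup (hV.2 ε hε) ?_)
    rintro a ⟨⟨ha0, haε⟩, haS⟩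
    refine usup hU fun b hb => ⟨⟨?_, ?_⟩, hSmul a haS b hb⟩
    · exact mul_pos ha0 (hSsub hb).1
    · calc a * b < a * 1 := mul_lt_mul_of_pos_left (hSsub hb).2 ha0
      _ = a := mul_one a
      _ < ε := haε

lemma KS_sub_zeroPlus (hSsub : S ⊆ Ioo 0 1) (hSmul : ∀ a ∈ S, ∀ b ∈ S, a * b ∈ S)
    (hSne : S.Nonempty) : K S ⊆ zeroPlus S := by
  intro p hp
  have hpS : S ∈ p := (K_ideal hSmul hSne).2.1 hp
  refine ⟨hpS, fun ε hε => ?_⟩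
  have hideal : IsIdealIn S {U : Ultrafilter ℝ | S ∈ U ∧ Ioo 0 ε ∩ S ∈ U} := by
    obtain ⟨x, hx⟩ := eps_nonempty hSsub hSmul hSne hε
    refine ⟨⟨pure x, Ultrafilter.mem_pure.2 hx.2, Ultrafilter.mem_pure.2 hx⟩,
      fun U hU => hU.1, ?_⟩
    rintro U ⟨hU1, hU2⟩ V hV
    constructor
    · refine ⟨mul_mem_beta hSmul hU1 hV, mem_mul'.2 (usup hU2 ?_)⟩
      rintro a ⟨⟨ha0, haε⟩, haS⟩
      refine usup hV fun b hb => ⟨⟨mul_pos ha0 (hSsub hb).1, ?_⟩, hSmul a haS b hb⟩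
      calc a * b < a * 1 := mul_lt_mul_of_pos_left (hSsub hb).2 ha0
      _ = a := mul_one a
      _ < ε := haε
    · refine ⟨mul_mem_beta hSmul hV hU1, mem_mul'.2 (usup hV ?_)⟩
      intro a haS
      refine usup hU2 ?_
      rintro b ⟨⟨hb0, hbε⟩, hbS⟩
      refine ⟨⟨mul_pos (hSsub haS).1 hb0, ?_⟩, hSmul a haS b hbS⟩
      calc a * b < 1 * b := mul_lt_mul_of_pos_right (hSsub haS).2 hb0
      _ = b := one_mul b
      _ < ε := hbε
  exact (Set.mem_sInter.1 hp _ hideal).2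

lemma KS_sub_KI (hSsub : S ⊆ Ioo 0 1) (hSmul : ∀ a ∈ S, ∀ b ∈ S, a * b ∈ S)
    (hnon : ∃ U ∈ K (Ioo 0 1), S ∈ U) : K S ⊆ K (Ioo 0 1) := by
  obtain ⟨U0, hU0K, hU0S⟩ := hnon
  have hKI := K_ideal Imul Ine
  have hJ : IsIdealIn S (beta S ∩ K (Ioo 0 1)) := by
    refine ⟨⟨U0, hU0S, hU0K⟩, fun U hU => hU.1, ?_⟩
    rintro U ⟨hU1, hU2⟩ V hV
    have hV' : V ∈ beta (Ioo 0 1) := beta_mono hSsub hV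
    exact ⟨⟨mul_mem_beta hSmul hU1 hV, (hKI.2.2 U hU2 V hV').1⟩,
      ⟨mul_mem_beta hSmul hV hU1, (hKI.2.2 U hU2 V hV').2⟩⟩
  intro p hp
  exact (Set.mem_sInter.1 hp _ hJ).2

lemma mem_KS_of (hSsub : S ⊆ Ioo 0 1) (hSmul : ∀ a ∈ S, ∀ b ∈ S, a * b ∈ S)
    {p : Ultrafilter ℝ} (hpK : p ∈ K (Ioo 0 1)) (hpS : S ∈ p) : p ∈ K S := by
  have hSne : S.Nonempty := Ultrafilter.nonempty_of_mem hpS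
  rw [K_eq Imul Ine] at hpK
  obtain ⟨L, hL, hpL⟩ := hpK
  have hCL : LIdeal S (beta S ∩ L) := by
    refine ⟨⟨p, hpS, hpL⟩, (beta_isClosed S).inter hL.1.2.1, fun U hU => hU.1, ?_⟩
    rintro V hV U ⟨hU1, hU2⟩
    exact ⟨mul_mem_beta hSmul hV hU1, hL.1.2.2.2 V (beta_mono hSsub hV) U hU2⟩
  obtain ⟨M, hM, hMsub⟩ := exists_minLeft_sub hCL
  obtain ⟨e, heM, he⟩ := ellis hM.1.1 hM.1.2.1.isCompact
    (fun x hx y hy => hM.1.2.2.2 x (hM.1.2.2.1 hx) y hy)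
  have heL : e ∈ L := (hMsub heM).2
  have horb := minLeft_eq_orbit Imul hL heL
  have hpmem : p ∈ (· * e) '' beta (Ioo 0 1) := horb.symm ▸ hpL
  obtain ⟨s, hs, hse⟩ := hpmem
  have hpe : p * e = p := by
    rw [← hse]
    show s * e * e = s * e
    rw [umul_assoc, he]
  have hpM : p ∈ M := by
    rw [← hpe]
    exact hM.1.2.2.2 p hpS e heM
  rw [K_eq hSmul hSne]
  exact ⟨M, hM, hpM⟩

end

theorem statement6 (S : Set ℝ) (hS : IsUnitSubsemigroup S) :
    (PiecewiseSyndeticIn (Ioo 0 1) S ↔ ∃ U ∈ K (Ioo 0 1), S ∈ U) ∧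
      (PiecewiseSyndeticIn (Ioo 0 1) S ↔ K (Ioo 0 1) ∩ zeroPlus S = K S) ∧
      (PiecewiseSyndeticIn (Ioo 0 1) S ↔ (K (Ioo 0 1) ∩ zeroPlus S).Nonempty) := by
  obtain ⟨hSne, hSsub, hSmul⟩ := hS
  have h12 : PiecewiseSyndeticIn (Ioo 0 1) S ↔ ∃ U ∈ K (Ioo 0 1), S ∈ U :=
    ⟨fun h => ps_to_K Imul Ine h, fun ⟨U, hU, hSU⟩ => K_to_ps Imul Ine hU hSU⟩
  have h24 : (∃ U ∈ K (Ioo 0 1), S ∈ U) → (K (Ioo 0 1) ∩ zeroPlus S).Nonempty := by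
    rintro ⟨U, hU, hSU⟩
    obtain ⟨V, hV⟩ := exists_zeroPlus hSsub hSmul hSne
    refine ⟨V * U, ?_, zeroPlus_absorb hSsub hSmul hV hSU⟩
    have hVb : V ∈ beta (Ioo 0 1) := beta_mono hSsub hV.1
    exact ((K_ideal Imul Ine).2.2 U hU V hVb).2
  have h41 : (K (Ioo 0 1) ∩ zeroPlus S).Nonempty → ∃ U ∈ K (Ioo 0 1), S ∈ U :=
    fun ⟨U, hU⟩ => ⟨U, hU.1, hU.2.1⟩
  refine ⟨h12, ⟨fun hps => ?_, fun heq => ?_⟩,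
    ⟨fun h => h24 (h12.1 h), fun h => h12.2 (h41 h)⟩⟩
  · refine Set.Subset.antisymm ?_ ?_
    · rintro p ⟨hpK, hpz⟩
      exact mem_KS_of hSsub hSmul hpK hpz.1
    · intro p hp
      exact ⟨KS_sub_KI hSsub hSmul (h12.1 hps) hp, KS_sub_zeroPlus hSsub hSmul hSne hp⟩
  · refine h12.2 (h41 ?_)
    rw [heq]
    exact (K_ideal hSmul hSne).1
end

section
/- If (S,+) is an HL-semigroup, then (S ∩ (0,1), ·) is a ℚ-infinitesimal semigroup. -/
open Set MvPolynomial

attribute [local instance] Ultrafilter.mul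

lemma nsmul_mem_HL (T : Set ℝ) (hadd : ∀ x ∈ T, ∀ y ∈ T, x + y ∈ T) :
    ∀ n : ℕ, 0 < n → ∀ x ∈ T, (n : ℝ) * x ∈ T := by
  intro n hn
  induction n with
  | zero => omega
  | succ k ih =>
    intro x hx
    rcases Nat.eq_zero_or_pos k with hk | hk
    · subst hk; simpa using hx
    · have := hadd _ (ih hk x hx) x hx
      have : (k : ℝ) * x + x ∈ T := this
      convert this using 1
      push_cast; ring

theorem statement7 (T : Set ℝ) (hT : IsHLSemigroup T) :
    QInfinitesimal (T ∩ Ioo 0 1) := by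
  obtain ⟨hpos, hadd, hdense, hmul, hdiv⟩ := hT
  refine ⟨inter_subset_right, fun a ha b hb => hmul a ha b hb, ?_⟩
  intro s hs q hq hqs
  obtain ⟨hsT, hs0, hs1⟩ := hs
  set a : ℕ := q.num.toNat with ha_def
  set b : ℕ := q.den with hb_def
  have hnum : 0 < q.num := Rat.num_pos.mpr hq
  have ha : 0 < a := by omega
  have hb : 0 < b := q.pos
  have hna : ((a : ℤ) : ℝ) = ((q.num : ℤ) : ℝ) := by
    exact_mod_cast congrArg (fun z : ℤ => (z : ℝ)) (Int.toNat_of_nonneg hnum.le)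
  have hqab : (q : ℝ) = (a : ℝ) / (b : ℝ) := by
    rw [Rat.cast_def, ← hna]
    norm_num
    rfl
  have hbR : (0 : ℝ) < (b : ℝ) := by exact_mod_cast hb
  -- pick t ∈ T with 1/(2b) < t < 1/b
  obtain ⟨t, htT, ht1, ht2⟩ := hdense (1 / (2 * b)) (1 / b)
    (by positivity) (by
      rw [div_lt_div_iff₀ (by positivity) hbR]
      linarith)
  have ht0 : 0 < t := lt_trans (by positivity) ht1
  have htlt1 : t < 1 := lt_of_lt_of_le ht2 (by
    rw [div_le_one hbR]; exact_mod_cast hb)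
  have htI : t ∈ T ∩ Ioo 0 1 := ⟨htT, ht0, htlt1⟩
  have hts : t * s ∈ T := (hdiv t htI s hsT).2
  have hx : (a : ℝ) * (t * s) ∈ T := nsmul_mem_HL T hadd a ha _ hts
  have hyT : (b : ℝ) * t ∈ T := nsmul_mem_HL T hadd b hb t htT
  have hy1 : (b : ℝ) * t < 1 := by
    have := (lt_div_iff₀ hbR).mp ht2
    linarith [mul_comm (b : ℝ) t]
  have hyI : (b : ℝ) * t ∈ T ∩ Ioo 0 1 := ⟨hyT, by positivity, hy1⟩
  have hfin : ((a : ℝ) * (t * s)) / ((b : ℝ) * t) ∈ T := (hdiv _ hyI _ hx).1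
  have heq : ((a : ℝ) * (t * s)) / ((b : ℝ) * t) = (q : ℝ) * s := by
    rw [hqab]
    field_simp
  rw [heq] at hfin
  have hqpos : (0 : ℝ) < (q : ℝ) := by exact_mod_cast hq
  exact ⟨hfin, mul_pos hqpos hs0, hqs⟩
end

section
/- The set S = {qπ^z : q ∈ ℚ⁺, z ∈ ℕ∪{0}} ∩ (0,1) is a ℚ-infinitesimal subsemigroup of ((0,1),·), but there is no HL-semigroup T with S = T ∩ (0,1). -/
open Set MvPolynomial

attribute [local instance] Ultrafilter.mul

theorem statement8 :
    QInfinitesimal {x : ℝ | x ∈ Ioo (0 : ℝ) 1 ∧ ∃ q : ℚ, 0 < q ∧ ∃ z : ℕ, x = (q : ℝ) * Real.pi ^ z} ∧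
      ¬ ∃ T : Set ℝ, IsHLSemigroup T ∧
        {x : ℝ | x ∈ Ioo (0 : ℝ) 1 ∧ ∃ q : ℚ, 0 < q ∧ ∃ z : ℕ, x = (q : ℝ) * Real.pi ^ z} =
          T ∩ Ioo 0 1 := by
  have pi_pos := Real.pi_pos
  have pi_lt4 : Real.pi < 4 := by linarith [Real.pi_lt_d2]
  have pi_gt3 : 3 < Real.pi := Real.pi_gt_three
  set S : Set ℝ :=
    {x : ℝ | x ∈ Ioo (0 : ℝ) 1 ∧ ∃ q : ℚ, 0 < q ∧ ∃ z : ℕ, x = (q : ℝ) * Real.pi ^ z}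
    with hSdef
  constructor
  · refine ⟨fun x hx => hx.1, ?_, ?_⟩
    · rintro a ⟨ha01, qa, hqa, za, rfl⟩ b ⟨hb01, qb, hqb, zb, rfl⟩
      refine ⟨⟨mul_pos ha01.1 hb01.1, ?_⟩, qa * qb, mul_pos hqa hqb, za + zb, ?_⟩
      · have := mul_lt_mul'' ha01.2 hb01.2 (le_of_lt ha01.1) (le_of_lt hb01.1)
        simpa using this
      · push_cast
        rw [pow_add]; ring
    · rintro s ⟨hs01, qs, hqs, zs, rfl⟩ q hq hlt
      have hqR : (0:ℝ) < (q:ℝ) := by exact_mod_cast hq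
      refine ⟨⟨mul_pos hqR hs01.1, hlt⟩, q * qs, mul_pos hq hqs, zs, ?_⟩
      push_cast; ring
  · rintro ⟨T, ⟨hTpos, hTadd, hTdense, hTmul, hTdiv⟩, hST⟩
    have hratS : ∀ r : ℚ, 0 < r → (r:ℝ) < 1 → (r:ℝ) ∈ S := by
      intro r hr hr1
      exact ⟨⟨by exact_mod_cast hr, hr1⟩, r, hr, 0, by simp⟩
    have hpi8S : Real.pi / 8 ∈ S := by
      refine ⟨⟨by positivity, by linarith⟩, 1/8, by norm_num, 1, by push_cast; ring⟩
    have hhalfS : ((1/2 : ℚ) : ℝ) ∈ S := hratS (1/2) (by norm_num) (by norm_num)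
    have hSsub : ∀ x ∈ S, x ∈ T ∩ Ioo 0 1 := by
      intro x hx; rw [← hST]; exact hx
    have hST' : ∀ x, x ∈ T → x ∈ Ioo (0:ℝ) 1 → x ∈ S := by
      intro x h1 h2; rw [hST]; exact ⟨h1, h2⟩
    have hpi8T : Real.pi / 8 ∈ T ∩ Ioo 0 1 := hSsub _ hpi8S
    have hhalfT : ((1/2 : ℚ) : ℝ) ∈ T ∩ Ioo 0 1 := hSsub _ hhalfS
    -- 4/π ∈ T
    have h4pi : ((1/2 : ℚ) : ℝ) / (Real.pi / 8) ∈ T :=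
      (hTdiv _ hpi8T _ hhalfT.1).1
    -- 2/π ∈ T
    have h2piT : 2 / Real.pi ∈ T := by
      have h := (hTdiv _ hhalfT _ h4pi).2
      have heq : ((1/2 : ℚ) : ℝ) * (((1/2 : ℚ) : ℝ) / (Real.pi / 8)) = 2 / Real.pi := by
        push_cast
        field_simp
        ring
      rwa [heq] at h
    have h2piS : 2 / Real.pi ∈ S := by
      refine hST' _ h2piT ⟨by positivity, ?_⟩
      rw [div_lt_one pi_pos]; linarith
    obtain ⟨-, q0, hq0, z0, hz0⟩ := h2piS
    -- π ^ k is rational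
    have hpine : Real.pi ≠ 0 := ne_of_gt pi_pos
    have hq0R : ((q0:ℝ)) ≠ 0 := by
      have : (0:ℝ) < (q0:ℝ) := by exact_mod_cast hq0
      exact ne_of_gt this
    obtain ⟨k, hk0, c, hck⟩ : ∃ k : ℕ, 0 < k ∧ ∃ c : ℚ, Real.pi ^ k = (c : ℝ) := by
      refine ⟨z0 + 1, Nat.succ_pos _, 2 / q0, ?_⟩
      have h2 : (2:ℝ) = (q0:ℝ) * Real.pi ^ z0 * Real.pi := (div_eq_iff hpine).mp hz0
      rw [pow_succ]
      push_cast
      rw [eq_div_iff hq0R]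
      linear_combination -h2
    -- family of k+1 elements a i + π/8
    set a : Fin (k+1) → ℚ := fun i => ((i : ℕ) + 1) / (8 * (k + 1)) with hadef
    have ha_pos : ∀ i, 0 < a i := by
      intro i
      rw [hadef]
      positivity
    have ha_le : ∀ i : Fin (k+1), ((a i : ℝ)) ≤ 1/8 := by
      intro i
      have hiK : ((i : ℕ) : ℝ) ≤ (k : ℝ) := by
        exact_mod_cast Nat.lt_succ_iff.mp i.isLt
      have hD : (0:ℝ) < 8 * ((k:ℝ) + 1) := by positivity
      rw [hadef]
      push_cast
      rw [div_le_iff₀ hD]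
      nlinarith
    have ha_inj : Function.Injective a := by
      intro i j hij
      rw [hadef] at hij
      have hD : (8 * ((k:ℚ) + 1)) ≠ 0 := by positivity
      simp only [div_eq_div_iff hD hD] at hij
      have : ((i:ℕ) : ℚ) = ((j:ℕ) : ℚ) := by
        field_simp at hij
        linarith
      have : (i:ℕ) = (j:ℕ) := by exact_mod_cast this
      exact Fin.ext this
    have haS : ∀ i : Fin (k+1), ((a i : ℝ)) ∈ S := by
      intro i
      refine hratS (a i) (ha_pos i) ?_
      have := ha_le i; linarith
    have hvT : ∀ i : Fin (k+1), ((a i : ℝ)) + Real.pi / 8 ∈ T :=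
      fun i => hTadd _ (hSsub _ (haS i)).1 _ hpi8T.1
    have hvS : ∀ i : Fin (k+1),
        ∃ q : ℚ, 0 < q ∧ ∃ z : ℕ, ((a i : ℝ)) + Real.pi / 8 = (q:ℝ) * Real.pi ^ z := by
      intro i
      have hIoo : ((a i : ℝ)) + Real.pi / 8 ∈ Ioo (0:ℝ) 1 := by
        constructor
        · have : (0:ℝ) < (a i : ℝ) := by exact_mod_cast ha_pos i
          positivity
        · have := ha_le i; linarith
      exact (hST' _ (hvT i) hIoo).2
    choose q hq z hz using hvS
    have key : ∀ i : Fin (k+1),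
        ((a i : ℝ)) + Real.pi / 8 = (((q i * c ^ (z i / k) : ℚ)) : ℝ) * Real.pi ^ (z i % k) := by
      intro i
      rw [hz i]
      conv_lhs => rw [show z i = k * (z i / k) + z i % k from (Nat.div_add_mod _ _).symm]
      rw [pow_add, pow_mul, hck]
      push_cast
      ring
    set Q : Fin (k+1) → ℚ := fun i => q i * c ^ (z i / k) with hQdef
    obtain ⟨i, j, hij, hmod⟩ :=
      Fintype.exists_ne_map_eq_of_card_lt
        (fun i : Fin (k+1) => (⟨z i % k, Nat.mod_lt _ hk0⟩ : Fin k)) (by simp)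
    have hzz : z i % k = z j % k := by simpa using hmod
    have keyj : ((a j : ℝ)) + Real.pi / 8 = ((Q j : ℝ)) * Real.pi ^ (z i % k) := by
      rw [hzz]; exact key j
    have haij : (a i : ℝ) ≠ (a j : ℝ) := by
      intro h
      exact hij (ha_inj (by exact_mod_cast h))
    have hsub : (((Q i : ℝ)) - (Q j : ℝ)) * Real.pi ^ (z i % k) = (a i : ℝ) - (a j : ℝ) := by
      linear_combination keyj - key i
    have hQQ : ((Q i : ℝ)) - (Q j : ℝ) ≠ 0 := by
      intro h
      apply haij
      have := hsub
      rw [h, zero_mul] at this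
      linarith [this]
    have hd : ((a i : ℝ) - (a j : ℝ)) / (((Q i : ℝ)) - (Q j : ℝ)) = Real.pi ^ (z i % k) := by
      rw [div_eq_iff hQQ]
      linear_combination -hsub
    exact irrational_pi ⟨8 * (Q i * ((a i - a j) / (Q i - Q j)) - a i), by
      push_cast
      rw [hd]
      linear_combination -(8:ℝ) * key i⟩
end

section
/- Let U ∈ βS witness the partition regularity of systems σ₁(x₁,…,xₙ) = 0 and σ₂(y₁,…,y_l) = 0 on a subsemigroup S of (ℝ⁺,·). Then U also witnesses the partition regularity of the combined system consisting of all equations of σ₁, all equations of σ₂, and the additional equation x₁ = y₁. -/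
open Set MvPolynomial

attribute [local instance] Ultrafilter.mul

theorem statement11 {n l m t : ℕ}
    (σ₁ : Fin m → MvPolynomial (Fin (n + 1)) ℝ) (σ₂ : Fin t → MvPolynomial (Fin (l + 1)) ℝ)
    (S : Set ℝ) (hS : S ⊆ Ioi 0) (hmul : ∀ a ∈ S, ∀ b ∈ S, a * b ∈ S)
    (U : Ultrafilter ℝ) (hUS : S ∈ U)
    (h1 : IotaUltra σ₁ U) (h2 : IotaUltra σ₂ U) :
    ∀ A ∈ U, ∃ a : Fin (n + 1) → ℝ, ∃ b : Fin (l + 1) → ℝ,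
      (∀ i, a i ∈ A) ∧ (∀ i, b i ∈ A) ∧
      (∀ j, eval a (σ₁ j) = 0) ∧ (∀ j, eval b (σ₂ j) = 0) ∧ a 0 = b 0 := by
  intro A hA
  set B₁ : Set ℝ := {x ∈ A | ∃ a : Fin (n + 1) → ℝ, (∀ i, a i ∈ A) ∧
    (∀ j, eval a (σ₁ j) = 0) ∧ a 0 = x} with hB₁
  set B₂ : Set ℝ := {x ∈ A | ∃ b : Fin (l + 1) → ℝ, (∀ i, b i ∈ A) ∧
    (∀ j, eval b (σ₂ j) = 0) ∧ b 0 = x} with hB₂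
  have hB₁U : B₁ ∈ U := by
    by_contra h
    have hc : A ∩ B₁ᶜ ∈ U := U.inter_mem hA ((Ultrafilter.compl_mem_iff_notMem).2 h)
    obtain ⟨a, ha, hsol⟩ := h1 _ hc
    have : a 0 ∈ B₁ := ⟨(ha 0).1, a, fun i => (ha i).1, hsol, rfl⟩
    exact (ha 0).2 this
  have hB₂U : B₂ ∈ U := by
    by_contra h
    have hc : A ∩ B₂ᶜ ∈ U := U.inter_mem hA ((Ultrafilter.compl_mem_iff_notMem).2 h)
    obtain ⟨b, hb, hsol⟩ := h2 _ hc
    have : b 0 ∈ B₂ := ⟨(hb 0).1, b, fun i => (hb i).1, hsol, rfl⟩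
    exact (hb 0).2 this
  obtain ⟨x, hx₁, hx₂⟩ := Ultrafilter.nonempty_of_mem (U.inter_mem hB₁U hB₂U)
  obtain ⟨-, a, haA, hasol, ha0⟩ := hx₁
  obtain ⟨-, b, hbA, hbsol, hb0⟩ := hx₂
  exact ⟨a, b, haA, hbA, hasol, hbsol, by rw [ha0, hb0]⟩
end

section
/- If S is a ℚ-infinitesimal semigroup, then 0⁺(S) is a left ideal with respect to βℚ⁺: for all U ∈ 0⁺(S) and all V ∈ βℚ⁺, V ⊙ U ∈ 0⁺(S). -/
open Set MvPolynomial

attribute [local instance] Ultrafilter.mul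

theorem statement12 (S : Set ℝ) (hS : QInfinitesimal S)
    (U : Ultrafilter ℝ) (hU : U ∈ zeroPlus S)
    (V : Ultrafilter ℝ) (hV : Qpos ∈ V) :
    V * U ∈ zeroPlus S := by
  obtain ⟨hS1, hS2, hS3⟩ := hS
  obtain ⟨hUS, hUε⟩ := hU
  have key : ∀ ε : ℝ, 0 < ε → Ioo 0 ε ∩ S ∈ V * U := by
    intro ε hε
    have h : ∀ᶠ q in (V : Filter ℝ), ∀ᶠ s in (U : Filter ℝ), q * s ∈ Ioo 0 ε ∩ S := by
      filter_upwards [hV] with q hq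
      obtain ⟨hq0, r, rfl⟩ := hq
      have hδ : 0 < min ε 1 / (r : ℝ) := by positivity
      filter_upwards [hUε _ hδ, hUS] with s hs hsS
      obtain ⟨⟨hs0, hslt⟩, -⟩ := hs
      have hr : (0 : ℚ) < r := by exact_mod_cast hq0
      have hrs : (r : ℝ) * s < min ε 1 := by
        calc (r : ℝ) * s < (r : ℝ) * (min ε 1 / (r : ℝ)) := by
              exact mul_lt_mul_of_pos_left hslt hq0
          _ = min ε 1 := by field_simp
      refine ⟨⟨by positivity, lt_of_lt_of_le hrs (min_le_left _ _)⟩, ?_⟩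
      exact hS3 s hsS r hr (lt_of_lt_of_le hrs (min_le_right _ _))
    exact (Ultrafilter.eventually_mul V U (· ∈ Ioo 0 ε ∩ S)).2 h
  exact ⟨Filter.mem_of_superset (key 1 one_pos) (inter_subset_right), key⟩
end

section
/- If U ∈ 0⁺ = 0⁺((0,1)) and V ∈ βℝ⁺, then V ⊙ U ∈ β(0,1); consequently β(0,1) contains a left ideal of (βℝ⁺,⊙) and β(0,1) ∩ K(βℝ⁺,⊙) ≠ ∅, hence K(β(0,1),⊙) = β(0,1) ∩ K(βℝ⁺,⊙). -/
open Set MvPolynomial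

attribute [local instance] Ultrafilter.mul

namespace Aux13

open Filter Topology

/-- Associativity of the ultrafilter multiplication. -/
lemma umul_assoc (U V W : Ultrafilter ℝ) : U * V * W = U * (V * W) :=
  @mul_assoc _ Ultrafilter.semigroup U V W

lemma mem_umul {U V : Ultrafilter ℝ} {A B C : Set ℝ}
    (hA : A ∈ U) (hB : B ∈ V) (h : ∀ a ∈ A, ∀ b ∈ B, a * b ∈ C) : C ∈ U * V := by
  have : ∀ᶠ m in ↑(U * V), m ∈ C := by
    rw [Ultrafilter.eventually_mul]
    filter_upwards [hA] with a ha
    filter_upwards [hB] with b hb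
    exact h a ha b hb
  exact this

lemma beta_mono {T T' : Set ℝ} (h : T ⊆ T') : beta T ⊆ beta T' :=
  fun _ hU => Filter.mem_of_superset hU h

lemma beta_closed (T : Set ℝ) : IsClosed (beta T) := ultrafilter_isClosed_basic T

lemma beta_compact (T : Set ℝ) : IsCompact (beta T) := (beta_closed T).isCompact

lemma beta_mul {T : Set ℝ} (hT : ∀ a ∈ T, ∀ b ∈ T, a * b ∈ T) {U V : Ultrafilter ℝ}
    (hU : U ∈ beta T) (hV : V ∈ beta T) : U * V ∈ beta T :=
  mem_umul hU hV hT

/-- A (nonempty) left ideal of `βT`. -/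
def LIdeal (T : Set ℝ) (L : Set (Ultrafilter ℝ)) : Prop :=
  L.Nonempty ∧ L ⊆ beta T ∧ ∀ V ∈ beta T, ∀ u ∈ L, V * u ∈ L

/-- A minimal left ideal of `βT`. -/
def MinL (T : Set ℝ) (L : Set (Ultrafilter ℝ)) : Prop :=
  LIdeal T L ∧ ∀ L', LIdeal T L' → L' ⊆ L → L' = L

lemma orbit_LIdeal {T : Set ℝ} (hT : ∀ a ∈ T, ∀ b ∈ T, a * b ∈ T)
    {x : Ultrafilter ℝ} (hx : x ∈ beta T) :
    LIdeal T ((· * x) '' beta T) ∧ IsClosed ((· * x) '' beta T) := by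
  refine ⟨⟨⟨x * x, ⟨x, hx, rfl⟩⟩, ?_, ?_⟩, ?_⟩
  · rintro _ ⟨V, hV, rfl⟩
    exact beta_mul hT hV hx
  · rintro W hW _ ⟨V, hV, rfl⟩
    exact ⟨W * V, beta_mul hT hW hV, umul_assoc W V x⟩
  · exact ((beta_compact T).image (Ultrafilter.continuous_mul_left x)).isClosed

/-- Every closed left ideal contains a minimal (closed) left ideal. -/
lemma exists_minL {T : Set ℝ} (hT : ∀ a ∈ T, ∀ b ∈ T, a * b ∈ T)
    {L₀ : Set (Ultrafilter ℝ)} (h₀ : LIdeal T L₀) (hc₀ : IsClosed L₀) :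
    ∃ L, L ⊆ L₀ ∧ IsClosed L ∧ MinL T L := by
  set S : Set (Set (Ultrafilter ℝ)) := {L | L ⊆ L₀ ∧ IsClosed L ∧ LIdeal T L} with hS
  have hzorn : ∀ c ⊆ S, IsChain (· ⊆ ·) c → c.Nonempty →
      ∃ lb ∈ S, ∀ s ∈ c, lb ⊆ s := by
    intro c hcS hchain ⟨y, hy⟩
    haveI : Nonempty c := ⟨⟨y, hy⟩⟩
    have hne : (⋂₀ c).Nonempty := by
      apply IsCompact.nonempty_sInter_of_directed_nonempty_isCompact_isClosed
      · intro a ha b hb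
        rcases hchain.total ha hb with h | h
        · exact ⟨a, ha, Subset.rfl, h⟩
        · exact ⟨b, hb, h, Subset.rfl⟩
      · exact fun u hu => (hcS hu).2.2.1
      · exact fun u hu => (hcS hu).2.1.isCompact
      · exact fun u hu => (hcS hu).2.1
    refine ⟨⋂₀ c, ⟨?_, ?_, hne, ?_, ?_⟩, fun s hs => sInter_subset_of_mem hs⟩
    · exact (sInter_subset_of_mem hy).trans (hcS hy).1
    · exact isClosed_sInter fun u hu => (hcS hu).2.1
    · exact (sInter_subset_of_mem hy).trans (hcS hy).2.2.2.1
    · intro V hV u hu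
      exact mem_sInter.mpr fun s hs => (hcS hs).2.2.2.2 V hV u (mem_sInter.mp hu s hs)
  obtain ⟨m, hmx, hmin⟩ := zorn_superset_nonempty S hzorn L₀ ⟨Subset.rfl, hc₀, h₀⟩
  obtain ⟨hm₀, hmc, hmI⟩ := hmin.prop
  refine ⟨m, hm₀, hmc, hmI, ?_⟩
  intro L' hL' hsub
  obtain ⟨x, hxL'⟩ := hL'.1
  have hxb : x ∈ beta T := hL'.2.1 hxL'
  obtain ⟨horb, horbc⟩ := orbit_LIdeal hT hxb
  have horbsub : (· * x) '' beta T ⊆ L' := by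
    rintro _ ⟨V, hV, rfl⟩
    exact hL'.2.2 V hV x hxL'
  have hmem : (· * x) '' beta T ∈ S :=
    ⟨(horbsub.trans hsub).trans hm₀, horbc, horb⟩
  have := hmin.2 hmem (horbsub.trans hsub)
  exact hsub.antisymm (this.trans horbsub)

/-- A minimal left ideal is contained in every two-sided ideal. -/
lemma minL_subset_ideal {T : Set ℝ} {L I : Set (Ultrafilter ℝ)}
    (hL : MinL T L) (hI : IsIdealIn T I) : L ⊆ I := by
  obtain ⟨w, hw⟩ := hI.1
  obtain ⟨x, hx⟩ := hL.1.1
  have hwI : w * x ∈ I := (hI.2.2 w hw x (hL.1.2.1 hx)).1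
  have hwL : w * x ∈ L := hL.1.2.2 w (hI.2.1 hw) x hx
  have : LIdeal T (I ∩ L) := by
    refine ⟨⟨w * x, hwI, hwL⟩, inter_subset_right.trans hL.1.2.1, ?_⟩
    intro V hV u hu
    exact ⟨(hI.2.2 u hu.1 V hV).2, hL.1.2.2 V hV u hu.2⟩
  have heq := hL.2 (I ∩ L) this inter_subset_right
  intro z hz
  rw [← heq] at hz
  exact hz.1

lemma minL_subset_K {T : Set ℝ} {L : Set (Ultrafilter ℝ)} (hL : MinL T L) : L ⊆ K T :=
  fun x hx => mem_sInter.mpr fun _ hI => minL_subset_ideal hL hI hx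

/-- Minimal left ideals are preserved by right translation. -/
lemma minL_shift {T : Set ℝ} (hT : ∀ a ∈ T, ∀ b ∈ T, a * b ∈ T)
    {L : Set (Ultrafilter ℝ)} (hL : MinL T L) (hLc : IsClosed L)
    {v : Ultrafilter ℝ} (hv : v ∈ beta T) :
    MinL T ((· * v) '' L) ∧ IsClosed ((· * v) '' L) := by
  have hIL : LIdeal T ((· * v) '' L) := by
    refine ⟨hL.1.1.image _, ?_, ?_⟩
    · rintro _ ⟨l, hl, rfl⟩
      exact beta_mul hT (hL.1.2.1 hl) hv
    · rintro W hW _ ⟨l, hl, rfl⟩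
      exact ⟨W * l, hL.1.2.2 W hW l hl, umul_assoc W l v⟩
  refine ⟨⟨hIL, ?_⟩, (hLc.isCompact.image (Ultrafilter.continuous_mul_left v)).isClosed⟩
  intro L'' hL'' hsub
  set A : Set (Ultrafilter ℝ) := {w ∈ L | w * v ∈ L''} with hA
  have hAne : A.Nonempty := by
    obtain ⟨z, hz⟩ := hL''.1
    obtain ⟨w, hw, rfl⟩ := hsub hz
    exact ⟨w, hw, hz⟩
  have hAI : LIdeal T A := by
    refine ⟨hAne, (fun w hw => hL.1.2.1 hw.1), ?_⟩
    intro W hW u hu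
    refine ⟨hL.1.2.2 W hW u hu.1, ?_⟩
    rw [umul_assoc]
    exact hL''.2.2 W hW (u * v) hu.2
  have hAL : A = L := hL.2 A hAI (fun w hw => hw.1)
  refine hsub.antisymm ?_
  rintro _ ⟨l, hl, rfl⟩
  rw [← hAL] at hl
  exact hl.2

/-- Every element of `K T` lies in a closed minimal left ideal. -/
lemma K_mem_minL {T : Set ℝ} (hT : ∀ a ∈ T, ∀ b ∈ T, a * b ∈ T) (hTne : T.Nonempty)
    {x : Ultrafilter ℝ} (hx : x ∈ K T) :
    ∃ L, MinL T L ∧ IsClosed L ∧ x ∈ L := by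
  set J : Set (Ultrafilter ℝ) := {y | ∃ L, MinL T L ∧ IsClosed L ∧ y ∈ L} with hJ
  have hbetaI : LIdeal T (beta T) := by
    obtain ⟨t, ht⟩ := hTne
    exact ⟨⟨pure t, (Ultrafilter.mem_pure).mpr ht⟩, Subset.rfl,
      fun V hV u hu => beta_mul hT hV hu⟩
  obtain ⟨L₁, _, hL₁c, hL₁m⟩ := exists_minL hT hbetaI (beta_closed T)
  have hJI : IsIdealIn T J := by
    obtain ⟨y, hy⟩ := hL₁m.1.1
    refine ⟨⟨y, L₁, hL₁m, hL₁c, hy⟩, ?_, ?_⟩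
    · rintro u ⟨L, hLm, _, hu⟩
      exact hLm.1.2.1 hu
    · rintro u ⟨L, hLm, hLc, hu⟩ V hV
      constructor
      · obtain ⟨hm, hc⟩ := minL_shift hT hLm hLc hV
        exact ⟨(· * V) '' L, hm, hc, ⟨u, hu, rfl⟩⟩
      · exact ⟨L, hLm, hLc, hLm.1.2.2 V hV u hu⟩
  exact mem_sInter.mp hx J hJI

lemma exists_zp : ∃ U, U ∈ zeroPlus (Ioo 0 1) := by
  obtain ⟨U, hU⟩ := Ultrafilter.exists_le (𝓝[>] (0 : ℝ))
  have hmem : ∀ ε : ℝ, 0 < ε → Ioo (0 : ℝ) ε ∈ U := fun ε hε =>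
    hU (Ioo_mem_nhdsGT_of_mem ⟨le_refl 0, hε⟩)
  refine ⟨U, hmem 1 one_pos, fun ε hε => ?_⟩
  exact inter_mem (hmem ε hε) (hmem 1 one_pos)

lemma part1 : ∀ U ∈ zeroPlus (Ioo 0 1), ∀ V : Ultrafilter ℝ,
    Ioi (0 : ℝ) ∈ V → V * U ∈ beta (Ioo 0 1) := by
  intro U hU V hV
  have : ∀ᶠ m in ↑(V * U), m ∈ Ioo (0 : ℝ) 1 := by
    rw [Ultrafilter.eventually_mul]
    filter_upwards [hV] with a (ha : (0 : ℝ) < a)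
    filter_upwards [hU.2 (1 / a) (by positivity)] with b hb
    obtain ⟨⟨hb0, hb1⟩, -⟩ := hb
    refine ⟨mul_pos ha hb0, ?_⟩
    have := mul_lt_mul_of_pos_left hb1 ha
    rwa [mul_one_div_cancel (ne_of_gt ha)] at this
  exact this

end Aux13

theorem statement13 :
    (∀ U ∈ zeroPlus (Ioo 0 1), ∀ V : Ultrafilter ℝ, Ioi (0 : ℝ) ∈ V → V * U ∈ beta (Ioo 0 1)) ∧
      (beta (Ioo 0 1) ∩ K (Ioi 0)).Nonempty ∧
      K (Ioo 0 1) = beta (Ioo 0 1) ∩ K (Ioi 0) := by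
  classical
  open Aux13 in
  have hmulS : ∀ a ∈ Ioi (0 : ℝ), ∀ b ∈ Ioi (0 : ℝ), a * b ∈ Ioi (0 : ℝ) :=
    fun a ha b hb => Set.mem_Ioi.mpr (mul_pos (Set.mem_Ioi.mp ha) (Set.mem_Ioi.mp hb))
  have hmulT : ∀ a ∈ Ioo (0 : ℝ) 1, ∀ b ∈ Ioo (0 : ℝ) 1, a * b ∈ Ioo (0 : ℝ) 1 := by
    rintro a ⟨ha0, ha1⟩ b ⟨hb0, hb1⟩
    exact ⟨mul_pos ha0 hb0, by nlinarith⟩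
  have hsub : Ioo (0 : ℝ) 1 ⊆ Ioi 0 := fun x hx => hx.1
  have P1 := Aux13.part1
  -- Part (a)
  obtain ⟨U₀, hU₀⟩ := Aux13.exists_zp
  have hU₀T : U₀ ∈ beta (Ioo 0 1) := hU₀.1
  have hU₀S : U₀ ∈ beta (Ioi 0) := Aux13.beta_mono hsub hU₀T
  have hLg : Aux13.LIdeal (Ioi 0) ((· * U₀) '' beta (Ioi 0)) ∧
      IsClosed ((· * U₀) '' beta (Ioi 0)) := Aux13.orbit_LIdeal hmulS hU₀S
  obtain ⟨L, hLsub, hLc, hLm⟩ := Aux13.exists_minL hmulS hLg.1 hLg.2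
  obtain ⟨x₁, hx₁⟩ := hLm.1.1
  have hx₁a : x₁ ∈ beta (Ioo 0 1) := by
    obtain ⟨V, hV, rfl⟩ := hLsub hx₁
    exact P1 U₀ hU₀ V hV
  have partA : (beta (Ioo 0 1) ∩ K (Ioi 0)).Nonempty :=
    ⟨x₁, hx₁a, Aux13.minL_subset_K hLm hx₁⟩
  refine ⟨P1, partA, ?_⟩
  -- Part (b), forward inclusion
  have hIdeal : IsIdealIn (Ioo 0 1) (beta (Ioo 0 1) ∩ K (Ioi 0)) := by
    refine ⟨partA, inter_subset_left, ?_⟩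
    rintro u ⟨hu1, hu2⟩ v hv
    have hv' : v ∈ beta (Ioi 0) := Aux13.beta_mono hsub hv
    constructor
    · exact ⟨Aux13.beta_mul hmulT hu1 hv,
        mem_sInter.mpr fun I hI => (hI.2.2 u (mem_sInter.mp hu2 I hI) v hv').1⟩
    · exact ⟨Aux13.beta_mul hmulT hv hu1,
        mem_sInter.mpr fun I hI => (hI.2.2 u (mem_sInter.mp hu2 I hI) v hv').2⟩
  -- Part (b), reverse inclusion
  have hrev : beta (Ioo 0 1) ∩ K (Ioi 0) ⊆ K (Ioo 0 1) := by
    rintro x ⟨hxT, hxK⟩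
    obtain ⟨L, hLm, hLc, hxL⟩ :=
      Aux13.K_mem_minL hmulS ⟨1, by norm_num⟩ hxK
    have hL1 : Aux13.LIdeal (Ioo 0 1) (L ∩ beta (Ioo 0 1)) := by
      refine ⟨⟨x, hxL, hxT⟩, inter_subset_right, ?_⟩
      intro V hV u hu
      exact ⟨hLm.1.2.2 V (Aux13.beta_mono hsub hV) u hu.1,
        Aux13.beta_mul hmulT hV hu.2⟩
    obtain ⟨L₀, hL₀sub, hL₀c, hL₀m⟩ :=
      Aux13.exists_minL hmulT hL1 (hLc.inter (Aux13.beta_closed _))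
    obtain ⟨e, heL₀, hee⟩ :=
      @exists_idempotent_in_compact_subsemigroup (Ultrafilter ℝ) Ultrafilter.semigroup _ _
        Ultrafilter.continuous_mul_left L₀ hL₀m.1.1 hL₀c.isCompact
        (fun u hu v hv => hL₀m.1.2.2 u (hL₀m.1.2.1 hu) v hv)
    have heL : e ∈ L := (hL₀sub heL₀).1
    have hLe : Aux13.LIdeal (Ioi 0) ((· * e) '' L) := by
      refine ⟨hLm.1.1.image _, ?_, ?_⟩
      · rintro _ ⟨l, hl, rfl⟩
        exact hLm.1.2.1 (hLm.1.2.2 l (hLm.1.2.1 hl) e heL)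
      · rintro W hW _ ⟨l, hl, rfl⟩
        exact ⟨W * l, hLm.1.2.2 W hW l hl, Aux13.umul_assoc W l e⟩
    have hLeL : (· * e) '' L = L := by
      refine hLm.2 _ hLe ?_
      rintro _ ⟨l, hl, rfl⟩
      exact hLm.1.2.2 l (hLm.1.2.1 hl) e heL
    have hxL' := hxL
    rw [← hLeL] at hxL'
    obtain ⟨u, hu, hue⟩ := hxL'
    have hxe : x * e = x := by
      rw [← hue, Aux13.umul_assoc, hee]
    refine mem_sInter.mpr fun I hI => ?_
    have heI : e ∈ I := Aux13.minL_subset_ideal hL₀m hI heL₀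
    have := (hI.2.2 e heI x hxT).2
    rwa [hxe] at this
  exact subset_antisymm (sInter_subset_of_mem hIdeal) hrev
end

section
/- Let σ(x₁,…,xₙ) = 0 be a homogeneous polynomial system that is partition regular on ℝ⁺. Then the closure of K(β(0,1),⊙) is contained in the set of ι_σ-ultrafilters in β(0,1); in particular σ = 0 is partition regular near zero on (0,1). -/
open Set MvPolynomial

attribute [local instance] Ultrafilter.mul

section Aux

variable {n m : ℕ}

lemma solvableIn_mono {σ : Fin m → MvPolynomial (Fin n) ℝ} {A B : Set ℝ}
    (h : A ⊆ B) (hA : SolvableIn σ A) : SolvableIn σ B := by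
  obtain ⟨a, ha, hs⟩ := hA
  exact ⟨a, fun i => h (ha i), hs⟩

lemma mem_ultra_mul {U V : Ultrafilter ℝ} {A : Set ℝ} :
    A ∈ U * V ↔ {x : ℝ | {y : ℝ | x * y ∈ A} ∈ V} ∈ U := Iff.rfl

lemma iota_mul_right {σ : Fin m → MvPolynomial (Fin n) ℝ} (hhom : Homogeneous σ)
    {W V : Ultrafilter ℝ} (hW : IotaUltra σ W) (hV : Ioi (0:ℝ) ∈ V) :
    IotaUltra σ (V * W) := by
  intro A hA
  rw [mem_ultra_mul] at hA
  obtain ⟨x, hx1, hx2⟩ := Ultrafilter.nonempty_of_mem (Filter.inter_mem hV hA)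
  obtain ⟨b, hb, hsol⟩ := hW _ hx2
  refine ⟨fun i => x * b i, fun i => hb i, ?_⟩
  exact (hhom x (ne_of_gt hx1) b).1 hsol

lemma iota_mul_left {σ : Fin m → MvPolynomial (Fin n) ℝ} (hhom : Homogeneous σ)
    {W V : Ultrafilter ℝ} (hW : IotaUltra σ W) (hV : Ioi (0:ℝ) ∈ V) :
    IotaUltra σ (W * V) := by
  intro A hA
  rw [mem_ultra_mul] at hA
  obtain ⟨b, hb, hsol⟩ := hW _ hA
  have hD : (Ioi (0:ℝ) ∩ ⋂ i, {y | b i * y ∈ A}) ∈ V :=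
    Filter.inter_mem hV (Filter.iInter_mem.2 fun i => hb i)
  obtain ⟨y, hy1, hy2⟩ := Ultrafilter.nonempty_of_mem hD
  refine ⟨fun i => y * b i, fun i => ?_, (hhom y (ne_of_gt hy1) b).1 hsol⟩
  have := Set.mem_iInter.1 hy2 i
  simpa [mul_comm] using this

lemma exists_iota {σ : Fin m → MvPolynomial (Fin n) ℝ}
    (hpr : PartRegOn σ (Ioi 0)) :
    ∃ W : Ultrafilter ℝ, Ioi (0:ℝ) ∈ W ∧ IotaUltra σ W := by
  set S : Set (Set ℝ) := insert (Ioi 0) {B | ∃ A, ¬ SolvableIn σ A ∧ B = Aᶜ} with hS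
  haveI hne : (Filter.generate S).NeBot := by
    rw [Filter.generate_neBot_iff]
    intro t hts htfin
    by_contra hempty
    rw [Set.not_nonempty_iff_eq_empty] at hempty
    classical
    set t' : Set (Set ℝ) := t \ {Ioi 0} with ht'
    have ht'fin : t'.Finite := htfin.subset (Set.diff_subset)
    set L : List (Set ℝ) := ht'fin.toFinset.toList with hL
    set k : ℕ := L.length with hk
    have hmemL : ∀ s ∈ t', ∃ i : Fin k, L.get i = s := by
      intro s hs
      have : s ∈ L := by
        rw [hL, Finset.mem_toList, Set.Finite.mem_toFinset]
        exact hs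
      exact List.mem_iff_get.1 this
    have hLt' : ∀ i : Fin k, L.get i ∈ t' := by
      intro i
      exact ht'fin.mem_toFinset.1 (Finset.mem_toList.1 (L.get_mem i))
    have hcov : Ioi (0:ℝ) ⊆ ⋃ i : Fin k, (L.get i)ᶜ := by
      intro x hx
      by_contra hxc
      simp only [Set.mem_iUnion, Set.mem_compl_iff, not_exists, not_not] at hxc
      have hxt : x ∈ ⋂₀ t := by
        intro s hs
        by_cases hs0 : s = Ioi 0
        · rw [hs0]; exact hx
        · obtain ⟨i, hi⟩ := hmemL s ⟨hs, hs0⟩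
          rw [← hi]; exact hxc i
      rw [hempty] at hxt
      exact hxt
    have hkpos : Nonempty (Fin k) := by
      obtain ⟨i, -⟩ := Set.mem_iUnion.1 (hcov (show (1:ℝ) ∈ Ioi 0 by norm_num))
      exact ⟨i⟩
    set c : ℝ → Fin k := fun x =>
      if h : ∃ i : Fin k, x ∉ L.get i then h.choose else Classical.arbitrary (Fin k) with hc
    obtain ⟨j, hj⟩ := hpr k c
    have hsub : {x ∈ Ioi (0:ℝ) | c x = j} ⊆ (L.get j)ᶜ := by
      rintro x ⟨hx1, hx2⟩
      have hex : ∃ i : Fin k, x ∉ L.get i := by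
        obtain ⟨i, hi⟩ := Set.mem_iUnion.1 (hcov hx1)
        exact ⟨i, hi⟩
      have hcx : c x = hex.choose := dif_pos hex
      rw [← hx2, hcx]
      exact hex.choose_spec
    obtain ⟨A, hAns, hAc⟩ := (hts (hLt' j).1).resolve_left (hLt' j).2
    apply hAns
    apply solvableIn_mono (B := A) _ hj
    rw [show A = (L.get j)ᶜ by rw [hAc, compl_compl]]
    exact hsub
  obtain ⟨W, hW⟩ := Ultrafilter.exists_le (Filter.generate S)
  refine ⟨W, hW (Filter.mem_generate_of_mem (Set.mem_insert _ _)), ?_⟩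
  intro A hA
  by_contra hns
  have hcompl : Aᶜ ∈ W :=
    hW (Filter.mem_generate_of_mem (Set.mem_insert_of_mem _ ⟨A, hns, rfl⟩))
  have := Filter.inter_mem hA hcompl
  rw [Set.inter_compl_self] at this
  exact Ultrafilter.empty_notMem this

lemma exists_near_zero : ∃ V : Ultrafilter ℝ, ∀ ε : ℝ, 0 < ε → Ioo (0:ℝ) ε ∈ V := by
  haveI : (nhdsWithin (0:ℝ) (Ioi 0)).NeBot := nhdsGT_neBot 0
  obtain ⟨V, hV⟩ := Ultrafilter.exists_le (nhdsWithin (0:ℝ) (Ioi 0))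
  exact ⟨V, fun ε hε => hV (Ioo_mem_nhdsGT_of_mem ⟨le_refl 0, hε⟩)⟩

lemma small_mem_mul {W V : Ultrafilter ℝ} (hW : Ioi (0:ℝ) ∈ W)
    (hV : ∀ ε : ℝ, 0 < ε → Ioo (0:ℝ) ε ∈ V) {ε : ℝ} (hε : 0 < ε) :
    Ioo (0:ℝ) ε ∈ W * V := by
  rw [mem_ultra_mul]
  apply Filter.mem_of_superset hW
  intro x hx
  apply Filter.mem_of_superset (hV (ε / x) (div_pos hε hx))
  intro y hy
  constructor
  · exact mul_pos hx hy.1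
  · calc x * y = y * x := mul_comm _ _
    _ < ε := (lt_div_iff₀ hx).1 hy.2

lemma Ioo_mem_mul {U V : Ultrafilter ℝ} (hU : Ioo (0:ℝ) 1 ∈ U) (hV : Ioo (0:ℝ) 1 ∈ V) :
    Ioo (0:ℝ) 1 ∈ U * V := by
  rw [mem_ultra_mul]
  apply Filter.mem_of_superset hU
  intro x hx
  apply Filter.mem_of_superset hV
  intro y hy
  exact ⟨mul_pos hx.1 hy.1, by nlinarith [hx.1, hx.2, hy.1, hy.2]⟩

lemma iota_set_closed (σ : Fin m → MvPolynomial (Fin n) ℝ) :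
    IsClosed {U : Ultrafilter ℝ | Ioo (0:ℝ) 1 ∈ U ∧ IotaUltra σ U} := by
  have heq : {U : Ultrafilter ℝ | Ioo (0:ℝ) 1 ∈ U ∧ IotaUltra σ U}
      = {U : Ultrafilter ℝ | Ioo (0:ℝ) 1 ∈ U} ∩
        ⋂ A ∈ {A : Set ℝ | ¬ SolvableIn σ A}, {U : Ultrafilter ℝ | Aᶜ ∈ U} := by
    ext U
    simp only [Set.mem_inter_iff, Set.mem_iInter, Set.mem_setOf_eq]
    constructor
    · rintro ⟨h1, h2⟩
      refine ⟨h1, fun A hA => Ultrafilter.compl_mem_iff_notMem.2 fun hAU => hA (h2 A hAU)⟩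
    · rintro ⟨h1, h2⟩
      refine ⟨h1, fun A hAU => ?_⟩
      by_contra hA
      have := Filter.inter_mem hAU (h2 A hA)
      rw [Set.inter_compl_self] at this
      exact Ultrafilter.empty_notMem this
  rw [heq]
  exact (ultrafilter_isClosed_basic _).inter
    (isClosed_biInter fun A _ => ultrafilter_isClosed_basic _)

end Aux

theorem statement14 {n m : ℕ} (σ : Fin m → MvPolynomial (Fin n) ℝ)
    (hhom : Homogeneous σ) (hpr : PartRegOn σ (Ioi 0)) :
    closure (K (Ioo 0 1)) ⊆ {U : Ultrafilter ℝ | Ioo (0 : ℝ) 1 ∈ U ∧ IotaUltra σ U} ∧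
      PartRegNearZero σ (Ioo 0 1) := by
  obtain ⟨W, hWpos, hWiota⟩ := exists_iota hpr
  obtain ⟨V, hV⟩ := exists_near_zero
  have hVpos : Ioi (0:ℝ) ∈ V := Filter.mem_of_superset (hV 1 one_pos) Set.Ioo_subset_Ioi_self
  set Z : Ultrafilter ℝ := W * V with hZ
  have hZsmall : ∀ ε : ℝ, 0 < ε → Ioo (0:ℝ) ε ∈ Z := fun ε hε => small_mem_mul hWpos hV hε
  have hZ1 : Ioo (0:ℝ) 1 ∈ Z := hZsmall 1 one_pos
  have hZiota : IotaUltra σ Z := iota_mul_left hhom hWiota hVpos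
  have hIdeal : IsIdealIn (Ioo 0 1) {U : Ultrafilter ℝ | Ioo (0:ℝ) 1 ∈ U ∧ IotaUltra σ U} := by
    refine ⟨⟨Z, hZ1, hZiota⟩, fun U hU => hU.1, ?_⟩
    rintro U ⟨hU1, hUiota⟩ V' hV'
    have hV'1 : Ioo (0:ℝ) 1 ∈ V' := hV'
    have hUpos : Ioi (0:ℝ) ∈ U := Filter.mem_of_superset hU1 Set.Ioo_subset_Ioi_self
    have hV'pos : Ioi (0:ℝ) ∈ V' := Filter.mem_of_superset hV'1 Set.Ioo_subset_Ioi_self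
    exact ⟨⟨Ioo_mem_mul hU1 hV'1, iota_mul_left hhom hUiota hV'pos⟩,
      ⟨Ioo_mem_mul hV'1 hU1, iota_mul_right hhom hUiota hV'pos⟩⟩
  constructor
  · apply closure_minimal _ (iota_set_closed σ)
    intro U hU
    exact Set.mem_sInter.1 hU _ hIdeal
  · intro ε hε k c
    have hex : ∃ j : Fin k, {x : ℝ | c x = j} ∈ Z := by
      by_contra hno
      push_neg at hno
      have hint : (⋂ j : Fin k, {x : ℝ | c x = j}ᶜ) ∈ Z :=
        Filter.iInter_mem.2 fun j => Ultrafilter.compl_mem_iff_notMem.2 (hno j)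
      obtain ⟨x, hx⟩ := Ultrafilter.nonempty_of_mem hint
      simp only [Set.mem_iInter, Set.mem_compl_iff, Set.mem_setOf_eq] at hx
      exact hx (c x) rfl
    obtain ⟨j, hj⟩ := hex
    refine ⟨j, hZiota _ ?_⟩
    exact Filter.inter_mem (Filter.inter_mem hZ1 hj) (hZsmall ε hε)
end
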